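/- Let k ≥ 0. The Nédélec first-kind sequence 𝒫_{k+1} →∇→ (𝐏_k ⊕ 𝐱×𝐏̃_k) →∇×→ (𝐏_k ⊕ 𝐱 𝒫̃_k) →∇·→ 𝒫_k on ℝ³ is exact: (i) the kernel of ∇ on 𝒫_{k+1} consists exactly of the constants; (ii) ∇𝒫_{k+1} = {v ∈ 𝐏_k ⊕ 𝐱×𝐏̃_k : ∇×v = 0}; (iii) ∇×(𝐏_k ⊕ 𝐱×𝐏̃_k) = {v ∈ 𝐏_k ⊕ 𝐱 𝒫̃_k : ∇·v = 0}; (iv) ∇· maps 𝐏_k ⊕ 𝐱 𝒫̃_k onto 𝒫_k. -/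

import Mathlib

open MvPolynomial

/-- Polynomials on `ℝ³`. -/
abbrev R3 := MvPolynomial (Fin 3) ℝ

/-- Polynomial vector fields on `ℝ³`. -/
abbrev Vec3 := R3 × R3 × R3

/-- The gradient `∇p = (∂ₓ p, ∂_y p, ∂_z p)`. -/
noncomputable def grad3 (p : R3) : Vec3 := (pderiv 0 p, pderiv 1 p, pderiv 2 p)

/-- The three-dimensional vector curl. -/
noncomputable def curl3 (v : Vec3) : Vec3 :=
  (pderiv 1 v.2.2 - pderiv 2 v.2.1,
   pderiv 2 v.1 - pderiv 0 v.2.2,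
   pderiv 0 v.2.1 - pderiv 1 v.1)

/-- The divergence `∇·v = ∂ₓ v₁ + ∂_y v₂ + ∂_z v₃`. -/
noncomputable def div3 (v : Vec3) : R3 :=
  pderiv 0 v.1 + pderiv 1 v.2.1 + pderiv 2 v.2.2

/-- Membership in `𝐏_m`: all three components of total degree at most `m`. -/
def memP3 (m : ℕ) (v : Vec3) : Prop :=
  v.1.totalDegree ≤ m ∧ v.2.1.totalDegree ≤ m ∧ v.2.2.totalDegree ≤ m

/-- The cross product of polynomial vector fields. -/
noncomputable def cross3 (a b : Vec3) : Vec3 :=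
  (a.2.1 * b.2.2 - a.2.2 * b.2.1,
   a.2.2 * b.1 - a.1 * b.2.2,
   a.1 * b.2.1 - a.2.1 * b.1)

/-- The position vector field `𝐱 = (x, y, z)`. -/
noncomputable def xvec : Vec3 := (X 0, X 1, X 2)

/-- Membership in the Nédélec first-kind edge space `𝐏_k ⊕ 𝐱×𝐏̃_k`. -/
noncomputable def memNedE (k : ℕ) (v : Vec3) : Prop :=
  ∃ u w : Vec3, memP3 k u ∧ w.1.IsHomogeneous k ∧ w.2.1.IsHomogeneous k ∧
    w.2.2.IsHomogeneous k ∧ v = u + cross3 xvec w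

/-- Membership in the Nédélec first-kind face space `𝐏_k ⊕ 𝐱 𝒫̃_k`. -/
noncomputable def memNedV (k : ℕ) (v : Vec3) : Prop :=
  ∃ u : Vec3, ∃ p : R3, memP3 k u ∧ p.IsHomogeneous k ∧
    v = u + (X 0 * p, X 1 * p, X 2 * p)

/-! ### Auxiliary coefficient-level lemmas -/

lemma deg3 (d : Fin 3 →₀ ℕ) : d.degree = d 0 + d 1 + d 2 := by
  rw [Finsupp.degree_apply, Finset.sum_subset (Finset.subset_univ d.support)
    (fun x _ hx => by simpa using Finsupp.notMem_support_iff.mp hx)]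
  simp [Fin.sum_univ_three]

lemma coeff_pderiv (i : Fin 3) (p : R3) (d : Fin 3 →₀ ℕ) :
    coeff d (pderiv i p) = ((d i : ℝ) + 1) * coeff (d + Finsupp.single i 1) p := by
  induction p using MvPolynomial.induction_on' with
  | monomial s a =>
    rw [pderiv_monomial, coeff_monomial, coeff_monomial]
    by_cases h : s = d + Finsupp.single i 1
    · subst h
      have h1 : d + Finsupp.single i 1 - Finsupp.single i 1 = d :=
        add_tsub_cancel_right _ _
      have h2 : (d + Finsupp.single i 1 : Fin 3 →₀ ℕ) i = d i + 1 := by simp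
      rw [if_pos h1, if_pos rfl, h2]; push_cast; ring
    · rw [if_neg h]
      by_cases h0 : s i = 0
      · split <;> simp [h0]
      · have hle : Finsupp.single i 1 ≤ s := by
          rw [Finsupp.single_le_iff]; omega
        have hne : s - Finsupp.single i 1 ≠ d := by
          intro hd
          exact h (by rw [← hd, tsub_add_cancel_of_le hle])
        rw [if_neg hne]; ring
  | add p q hp hq => simp only [map_add, coeff_add, hp, hq]; ring

lemma pderiv_comm3 (i j : Fin 3) (p : R3) :
    pderiv i (pderiv j p) = pderiv j (pderiv i p) := by
  ext d
  rw [coeff_pderiv, coeff_pderiv, coeff_pderiv, coeff_pderiv,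
    add_right_comm d (Finsupp.single i 1)]
  by_cases h : i = j
  · subst h; ring
  · have h1 : (d + Finsupp.single i 1 : Fin 3 →₀ ℕ) j = d j := by
      simp [Finsupp.single_apply, h]
    have h2 : (d + Finsupp.single j 1 : Fin 3 →₀ ℕ) i = d i := by
      simp [Finsupp.single_apply, Ne.symm h]
    rw [h1, h2]; ring

lemma mem_support_pderiv {i : Fin 3} {p : R3} {d : Fin 3 →₀ ℕ}
    (h : d ∈ (pderiv i p).support) : d + Finsupp.single i 1 ∈ p.support := by
  rw [MvPolynomial.mem_support_iff] at h ⊢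
  intro hc
  apply h
  rw [coeff_pderiv, hc, mul_zero]

lemma degsum_eq (d : Fin 3 →₀ ℕ) : (d.sum fun _ e => e) = d.degree := rfl

lemma totalDegree_pderiv_le (i : Fin 3) (p : R3) {n : ℕ}
    (h : p.totalDegree ≤ n + 1) : (pderiv i p).totalDegree ≤ n := by
  apply Finset.sup_le
  intro d hd
  have h1 := MvPolynomial.le_totalDegree (mem_support_pderiv hd)
  rw [degsum_eq, deg3] at h1 ⊢
  have h2 : (d + Finsupp.single i 1 : Fin 3 →₀ ℕ) 0 + (d + Finsupp.single i 1 : Fin 3 →₀ ℕ) 1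
      + (d + Finsupp.single i 1 : Fin 3 →₀ ℕ) 2 = d 0 + d 1 + d 2 + 1 := by
    fin_cases i <;> simp [Finsupp.single_apply] <;> ring
  omega

lemma homogC_pderiv (n : ℕ) (i : Fin 3) (p : R3) :
    homogeneousComponent n (pderiv i p) = pderiv i (homogeneousComponent (n+1) p) := by
  ext d
  rw [coeff_homogeneousComponent, coeff_pderiv, coeff_pderiv, coeff_homogeneousComponent]
  have hd : (d + Finsupp.single i 1 : Fin 3 →₀ ℕ).degree = d.degree + 1 := by
    rw [deg3, deg3]
    fin_cases i <;> simp [Finsupp.single_apply] <;> ring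
  rw [hd]
  by_cases h : d.degree = n
  · rw [if_pos h, if_pos (by omega)]
  · rw [if_neg h, if_neg (by omega), mul_zero]

lemma coeff_X_mul_pderiv (i : Fin 3) (p : R3) (d : Fin 3 →₀ ℕ) :
    coeff d (X i * pderiv i p) = (d i : ℝ) * coeff d p := by
  rw [mul_comm, coeff_mul_X']
  by_cases h : i ∈ d.support
  · have hne : d i ≠ 0 := Finsupp.mem_support_iff.mp h
    rw [if_pos h, coeff_pderiv]
    have h1 : (d - Finsupp.single i 1 : Fin 3 →₀ ℕ) i = d i - 1 := by
      simp [Finsupp.tsub_apply]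
    have h2 : d - Finsupp.single i 1 + Finsupp.single i 1 = d :=
      tsub_add_cancel_of_le (Finsupp.single_le_iff.mpr (by omega))
    rw [h1, h2]
    congr 1
    have : (1:ℕ) ≤ d i := by omega
    push_cast [this]
    ring
  · rw [if_neg h]
    have : d i = 0 := Finsupp.notMem_support_iff.mp h
    rw [this]
    simp

lemma euler3 {n : ℕ} {p : R3} (hp : p.IsHomogeneous n) :
    X 0 * pderiv 0 p + X 1 * pderiv 1 p + X 2 * pderiv 2 p = C (n:ℝ) * p := by
  ext d
  rw [coeff_add, coeff_add, coeff_X_mul_pderiv, coeff_X_mul_pderiv, coeff_X_mul_pderiv,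
    coeff_C_mul]
  by_cases hc : coeff d p = 0
  · rw [hc]; ring
  · have hdeg : d.degree = n := by
      by_contra hne
      exact hc (hp.coeff_eq_zero hne)
    rw [← hdeg, deg3]
    push_cast
    ring

lemma eq_C_of_pderiv_zero {p : R3} (h : ∀ i, pderiv i p = 0) : p = C (coeff 0 p) := by
  ext d
  rw [coeff_C]
  by_cases hd : d = 0
  · subst hd; simp
  · rw [if_neg (fun he => hd he.symm)]
    obtain ⟨i, hi⟩ : ∃ i, d i ≠ 0 := by
      by_contra hall
      push_neg at hall
      exact hd (Finsupp.ext hall)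
    have hc := coeff_pderiv i p (d - Finsupp.single i 1)
    rw [h i, coeff_zero] at hc
    have h2 : d - Finsupp.single i 1 + Finsupp.single i 1 = d :=
      tsub_add_cancel_of_le (Finsupp.single_le_iff.mpr (by omega))
    rw [h2] at hc
    have h1 : (d - Finsupp.single i 1 : Fin 3 →₀ ℕ) i = d i - 1 := by
      simp [Finsupp.tsub_apply]
    rw [h1] at hc
    have hne : ((d i - 1 : ℕ) : ℝ) + 1 ≠ 0 := by positivity
    exact (mul_eq_zero.mp hc.symm).resolve_left hne

/-! ### Vector-calculus helpers -/

noncomputable def cmul (r : ℝ) (v : Vec3) : Vec3 := (C r * v.1, C r * v.2.1, C r * v.2.2)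
noncomputable def xmul (p : R3) : Vec3 := (X 0 * p, X 1 * p, X 2 * p)
noncomputable def Hv (n : ℕ) (v : Vec3) : Vec3 :=
  (homogeneousComponent n v.1, homogeneousComponent n v.2.1, homogeneousComponent n v.2.2)

lemma pd_ne (i j : Fin 3) (h : j ≠ i) : pderiv i (X j : R3) = 0 := pderiv_X_of_ne h

lemma gradXdot {m : ℕ} {b : Vec3} (h1 : b.1.IsHomogeneous m) (h2 : b.2.1.IsHomogeneous m)
    (h3 : b.2.2.IsHomogeneous m) (hc : curl3 b = 0) :
    grad3 (X 0 * b.1 + X 1 * b.2.1 + X 2 * b.2.2) = cmul ((m:ℝ)+1) b := by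
  obtain ⟨b1, b2, b3⟩ := b
  simp only at h1 h2 h3
  have e1 := euler3 h1
  have e2 := euler3 h2
  have e3 := euler3 h3
  simp only [curl3, Prod.ext_iff, Prod.fst_zero, Prod.snd_zero] at hc
  obtain ⟨hc1, hc2, hc3⟩ := hc
  have hC : (C ((m:ℝ)+1) : R3) = C (m:ℝ) + 1 := by rw [map_add, map_one]
  simp only [grad3, cmul, map_add, pderiv_mul, pderiv_X_self,
    pd_ne 0 1 (by decide), pd_ne 0 2 (by decide), pd_ne 1 0 (by decide),
    pd_ne 1 2 (by decide), pd_ne 2 0 (by decide), pd_ne 2 1 (by decide),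
    Prod.mk.injEq, hC]
  refine ⟨?_, ?_, ?_⟩
  · linear_combination e1 + X 1 * hc3 - X 2 * hc2
  · linear_combination e2 - X 0 * hc3 + X 2 * hc1
  · linear_combination e3 + X 0 * hc2 - X 1 * hc1

lemma curlCross {m : ℕ} {b : Vec3} (h1 : b.1.IsHomogeneous m) (h2 : b.2.1.IsHomogeneous m)
    (h3 : b.2.2.IsHomogeneous m) :
    curl3 (cross3 xvec b) = xmul (div3 b) - cmul ((m:ℝ)+2) b := by
  obtain ⟨b1, b2, b3⟩ := b
  simp only at h1 h2 h3
  have e1 := euler3 h1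
  have e2 := euler3 h2
  have e3 := euler3 h3
  have hC : (C ((m:ℝ)+2) : R3) = C (m:ℝ) + 2 := by
    rw [map_add, map_ofNat]
  simp only [curl3, cross3, xvec, xmul, div3, cmul, map_add, map_sub, pderiv_mul, pderiv_X_self,
    pd_ne 0 1 (by decide), pd_ne 0 2 (by decide), pd_ne 1 0 (by decide),
    pd_ne 1 2 (by decide), pd_ne 2 0 (by decide), pd_ne 2 1 (by decide),
    Prod.mk.injEq, hC, Prod.mk_sub_mk]
  refine ⟨?_, ?_, ?_⟩
  · linear_combination -e1
  · linear_combination -e2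
  · linear_combination -e3

lemma divXmul {m : ℕ} {p : R3} (hp : p.IsHomogeneous m) :
    div3 (xmul p) = C ((m:ℝ)+3) * p := by
  have e := euler3 hp
  have hC : (C ((m:ℝ)+3) : R3) = C (m:ℝ) + 3 := by rw [map_add, map_ofNat]
  simp only [div3, xmul, pderiv_mul, pderiv_X_self, hC]
  linear_combination e

/-! ### Plumbing -/

section plumbing
variable {ι : Type*} (s : Finset ι)

lemma div3_sum (f : ι → Vec3) : div3 (∑ i ∈ s, f i) = ∑ i ∈ s, div3 (f i) := by
  simp only [div3, Prod.fst_sum, Prod.snd_sum, map_sum, Finset.sum_add_distrib]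

lemma curl3_sum (f : ι → Vec3) : curl3 (∑ i ∈ s, f i) = ∑ i ∈ s, curl3 (f i) := by
  simp only [curl3, Prod.ext_iff, Prod.fst_sum, Prod.snd_sum, map_sum, Finset.sum_sub_distrib]
  exact ⟨trivial, trivial, trivial⟩

lemma grad3_sum (f : ι → R3) : grad3 (∑ i ∈ s, f i) = ∑ i ∈ s, grad3 (f i) := by
  simp only [grad3, Prod.ext_iff, Prod.fst_sum, Prod.snd_sum, map_sum]
  exact ⟨trivial, trivial, trivial⟩

lemma div3_add (v w : Vec3) : div3 (v + w) = div3 v + div3 w := by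
  simp only [div3, Prod.fst_add, Prod.snd_add, map_add]
  ring

lemma grad3_Cmul (r : ℝ) (p : R3) : grad3 (C r * p) = cmul r (grad3 p) := by
  simp only [grad3, cmul, pderiv_C_mul]

lemma div3_cmul (r : ℝ) (v : Vec3) : div3 (cmul r v) = C r * div3 v := by
  simp only [div3, cmul, pderiv_C_mul, mul_add]

lemma curl3_cmul (r : ℝ) (v : Vec3) : curl3 (cmul r v) = cmul r (curl3 v) := by
  simp only [curl3, cmul, pderiv_C_mul, mul_sub]

lemma cmul_cmul (a b : ℝ) (v : Vec3) : cmul a (cmul b v) = cmul (a*b) v := by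
  simp only [cmul, map_mul, mul_assoc]

lemma cmul_one (v : Vec3) : cmul 1 v = v := by simp [cmul]

lemma xmul_zero : xmul 0 = 0 := by simp [xmul, Prod.ext_iff]

lemma neg_cmul (a : ℝ) (v : Vec3) : -cmul a v = cmul (-a) v := by
  simp only [cmul, Prod.neg_mk, map_neg, neg_mul]

lemma cross3_cmul (r : ℝ) (a w : Vec3) : cross3 a (cmul r w) = cmul r (cross3 a w) := by
  simp only [cross3, cmul, Prod.mk.injEq]
  refine ⟨by ring, by ring, by ring⟩

lemma cmul_xmul (r : ℝ) (p : R3) : cmul r (xmul p) = xmul (C r * p) := by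
  simp only [cmul, xmul, Prod.mk.injEq]
  refine ⟨by ring, by ring, by ring⟩

lemma div3_Hv_succ (n : ℕ) (v : Vec3) : div3 (Hv (n+1) v) = homogeneousComponent n (div3 v) := by
  simp only [div3, Hv, ← homogC_pderiv, map_add]

lemma curl3_Hv_succ (n : ℕ) (v : Vec3) : curl3 (Hv (n+1) v) = Hv n (curl3 v) := by
  simp only [curl3, Hv, ← homogC_pderiv, map_sub]

lemma Hv_zero_curl (v : Vec3) : curl3 (Hv 0 v) = 0 := by
  simp [curl3, Hv, homogeneousComponent_zero, Prod.ext_iff]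

lemma Hv_zero_div (v : Vec3) : div3 (Hv 0 v) = 0 := by
  simp [div3, Hv, homogeneousComponent_zero]

lemma Hv_of_zero (n : ℕ) : Hv n 0 = 0 := by simp [Hv, Prod.ext_iff]

lemma sumH {p : R3} {N : ℕ} (h : p.totalDegree < N) :
    ∑ m ∈ Finset.range N, homogeneousComponent m p = p := by
  refine ((Finset.sum_subset (Finset.range_subset_range.mpr (by omega)) ?_).symm).trans
    (sum_homogeneousComponent p)
  intro x hx hnx
  simp only [Finset.mem_range] at hx hnx
  exact homogeneousComponent_eq_zero _ p (by omega)

lemma sumHv {v : Vec3} {N : ℕ} (h : memP3 (N-1) v) (hN : 0 < N) :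
    ∑ m ∈ Finset.range N, Hv m v = v := by
  obtain ⟨h1, h2, h3⟩ := h
  have e : ∀ p : R3, p.totalDegree ≤ N - 1 →
      ∑ m ∈ Finset.range N, homogeneousComponent m p = p :=
    fun p hp => sumH (by omega)
  simp only [Hv, Prod.ext_iff, Prod.fst_sum, Prod.snd_sum]
  exact ⟨e _ h1, e _ h2, e _ h3⟩

lemma H_self {p : R3} {n : ℕ} (h : p.IsHomogeneous n) : homogeneousComponent n p = p := by
  rw [homogeneousComponent_of_mem ((mem_homogeneousSubmodule _ _).mpr h), if_pos rfl]

lemma H_pderiv_high {p : R3} {n : ℕ} (h : p.totalDegree ≤ n) (i : Fin 3) :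
    homogeneousComponent n (pderiv i p) = 0 := by
  rw [homogC_pderiv, homogeneousComponent_eq_zero _ p (by omega), map_zero]

lemma memP3_mono {m n : ℕ} {v : Vec3} (h : m ≤ n) (hv : memP3 m v) : memP3 n v :=
  ⟨hv.1.trans h, hv.2.1.trans h, hv.2.2.trans h⟩

lemma memP3_add {n : ℕ} {v w : Vec3} (hv : memP3 n v) (hw : memP3 n w) : memP3 n (v + w) := by
  refine ⟨?_, ?_, ?_⟩ <;> simp only [Prod.fst_add, Prod.snd_add] <;>
    exact (totalDegree_add _ _).trans (by
      first
        | exact max_le hv.1 hw.1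
        | exact max_le hv.2.1 hw.2.1
        | exact max_le hv.2.2 hw.2.2)

lemma memP3_sum {n : ℕ} {f : ι → Vec3} (h : ∀ i ∈ s, memP3 n (f i)) :
    memP3 n (∑ i ∈ s, f i) := by
  refine ⟨?_, ?_, ?_⟩ <;>
    simp only [Prod.fst_sum, Prod.snd_sum] <;>
    exact totalDegree_finsetSum_le (fun i hi => by
      first
        | exact (h i hi).1
        | exact (h i hi).2.1
        | exact (h i hi).2.2)

lemma memP3_cmul {n : ℕ} {v : Vec3} (r : ℝ) (h : memP3 n v) : memP3 n (cmul r v) := by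
  have e : ∀ p : R3, p.totalDegree ≤ n → (C r * p).totalDegree ≤ n := fun p hp =>
    (totalDegree_mul _ _).trans (by simpa [totalDegree_C] using hp)
  exact ⟨e _ h.1, e _ h.2.1, e _ h.2.2⟩

lemma memP3_Hv (m : ℕ) (v : Vec3) : memP3 m (Hv m v) :=
  ⟨(homogeneousComponent_isHomogeneous m _).totalDegree_le,
   (homogeneousComponent_isHomogeneous m _).totalDegree_le,
   (homogeneousComponent_isHomogeneous m _).totalDegree_le⟩

lemma memP3_xmul {m : ℕ} {p : R3} (h : p.totalDegree ≤ m) : memP3 (m+1) (xmul p) := by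
  have e : ∀ i : Fin 3, (X i * p).totalDegree ≤ m + 1 := fun i =>
    (totalDegree_mul _ _).trans (by simp only [totalDegree_X]; omega)
  exact ⟨e 0, e 1, e 2⟩

lemma crossX_homog {k : ℕ} {w : Vec3} (h1 : w.1.IsHomogeneous k) (h2 : w.2.1.IsHomogeneous k)
    (h3 : w.2.2.IsHomogeneous k) :
    (cross3 xvec w).1.IsHomogeneous (k+1) ∧ (cross3 xvec w).2.1.IsHomogeneous (k+1) ∧
      (cross3 xvec w).2.2.IsHomogeneous (k+1) := by
  have hco : 1 + k = k + 1 := by omega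
  refine ⟨?_, ?_, ?_⟩ <;> simp only [cross3, xvec] <;>
    exact (hco ▸ ((isHomogeneous_X _ _).mul (by assumption))).sub
      (hco ▸ ((isHomogeneous_X _ _).mul (by assumption)))

lemma memP3_crossX {k : ℕ} {w : Vec3} (h1 : w.1.IsHomogeneous k) (h2 : w.2.1.IsHomogeneous k)
    (h3 : w.2.2.IsHomogeneous k) : memP3 (k+1) (cross3 xvec w) := by
  obtain ⟨a, b, c⟩ := crossX_homog h1 h2 h3
  exact ⟨a.totalDegree_le, b.totalDegree_le, c.totalDegree_le⟩

lemma memNedE_deg {k : ℕ} {v : Vec3} (h : memNedE k v) : memP3 (k+1) v := by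
  obtain ⟨u, w, hu, h1, h2, h3, rfl⟩ := h
  exact memP3_add (memP3_mono (by omega) hu) (memP3_crossX h1 h2 h3)

end plumbing

/-- The Nédélec first-kind sequence
`𝒫_{k+1} →∇→ (𝐏_k ⊕ 𝐱×𝐏̃_k) →∇×→ (𝐏_k ⊕ 𝐱 𝒫̃_k) →∇·→ 𝒫_k` on `ℝ³` is exact:
(i) the kernel of `∇` on `𝒫_{k+1}` consists exactly of the constants;
(ii) `∇𝒫_{k+1} = {v ∈ 𝐏_k ⊕ 𝐱×𝐏̃_k : ∇×v = 0}`;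
(iii) `∇×(𝐏_k ⊕ 𝐱×𝐏̃_k) = {v ∈ 𝐏_k ⊕ 𝐱 𝒫̃_k : ∇·v = 0}`;
(iv) `∇·` maps `𝐏_k ⊕ 𝐱 𝒫̃_k` onto `𝒫_k`. -/
theorem stmt_6 (k : ℕ) :
    (∀ p : R3, p.totalDegree ≤ k + 1 → (grad3 p = 0 ↔ ∃ c : ℝ, p = C c)) ∧
    ({v : Vec3 | ∃ p : R3, p.totalDegree ≤ k + 1 ∧ v = grad3 p} =
      {v : Vec3 | memNedE k v ∧ curl3 v = 0}) ∧
    ({w : Vec3 | ∃ v : Vec3, memNedE k v ∧ w = curl3 v} =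
      {w : Vec3 | memNedV k w ∧ div3 w = 0}) ∧
    (∀ q : R3, q.totalDegree ≤ k →
      ∃ v : Vec3, memNedV k v ∧ div3 v = q) := by
  refine ⟨?_, ?_, ?_, ?_⟩
  -- Part (i)
  · intro p _
    constructor
    · intro h
      simp only [grad3, Prod.ext_iff, Prod.fst_zero, Prod.snd_zero] at h
      refine ⟨coeff 0 p, eq_C_of_pderiv_zero ?_⟩
      intro i
      fin_cases i
      · exact h.1
      · exact h.2.1
      · exact h.2.2
    · rintro ⟨c, rfl⟩
      simp [grad3, Prod.ext_iff, pderiv_C]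
  -- Part (ii)
  · ext v
    simp only [Set.mem_setOf_eq]
    constructor
    · rintro ⟨p, hdeg, rfl⟩
      refine ⟨⟨grad3 p, 0, ⟨totalDegree_pderiv_le _ _ hdeg, totalDegree_pderiv_le _ _ hdeg,
          totalDegree_pderiv_le _ _ hdeg⟩, isHomogeneous_zero _ _ _, isHomogeneous_zero _ _ _,
          isHomogeneous_zero _ _ _, ?_⟩, ?_⟩
      · have hc : cross3 xvec (0 : Vec3) = 0 := by
          simp [cross3, Prod.ext_iff]
        rw [hc, add_zero]
      · simp only [curl3, grad3, Prod.ext_iff, Prod.fst_zero, Prod.snd_zero]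
        exact ⟨by rw [pderiv_comm3 1 2, sub_self], by rw [pderiv_comm3 2 0, sub_self],
          by rw [pderiv_comm3 0 1, sub_self]⟩
    · rintro ⟨hned, hcurl⟩
      have hdeg : memP3 (k+1) v := memNedE_deg hned
      have hcurlH : ∀ m, curl3 (Hv m v) = 0 := by
        intro m
        match m with
        | 0 => exact Hv_zero_curl v
        | n+1 => rw [curl3_Hv_succ, hcurl, Hv_of_zero]
      have hterm : ∀ m : ℕ, grad3 (C (1/((m:ℝ)+1)) * (X 0 * homogeneousComponent m v.1 +
          X 1 * homogeneousComponent m v.2.1 + X 2 * homogeneousComponent m v.2.2)) = Hv m v := by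
        intro m
        have hg := gradXdot (b := Hv m v) (homogeneousComponent_isHomogeneous m _)
          (homogeneousComponent_isHomogeneous m _) (homogeneousComponent_isHomogeneous m _)
          (hcurlH m)
        simp only [Hv] at hg ⊢
        rw [grad3_Cmul, hg, cmul_cmul,
          show (1/((m:ℝ)+1)) * ((m:ℝ)+1) = 1 by
            have : ((m:ℝ)+1) ≠ 0 := by positivity
            field_simp,
          cmul_one]
      refine ⟨∑ m ∈ Finset.range (k+2), C (1/((m:ℝ)+1)) * (X 0 * homogeneousComponent m v.1 +
          X 1 * homogeneousComponent m v.2.1 + X 2 * homogeneousComponent m v.2.2), ?_, ?_⟩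
      · -- degree bound
        apply totalDegree_finsetSum_le
        intro m hm
        simp only [Finset.mem_range] at hm
        by_cases hmk : m ≤ k
        · refine (totalDegree_mul _ _).trans ?_
          rw [totalDegree_C, zero_add]
          have e : ∀ q : R3, (X (0:Fin 3) * homogeneousComponent m q).totalDegree ≤ k + 1 ∧
              (X (1:Fin 3) * homogeneousComponent m q).totalDegree ≤ k + 1 ∧
              (X (2:Fin 3) * homogeneousComponent m q).totalDegree ≤ k + 1 := by
            intro q
            refine ⟨?_, ?_, ?_⟩ <;>
              exact (totalDegree_mul _ _).trans (by
                have := (homogeneousComponent_isHomogeneous m q).totalDegree_le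
                simp only [totalDegree_X]; omega)
          refine (totalDegree_add _ _).trans (max_le ((totalDegree_add _ _).trans
            (max_le (e v.1).1 (e v.2.1).2.1)) (e v.2.2).2.2)
        · -- m = k+1 : the top term vanishes
          have hm1 : m = k + 1 := by omega
          subst hm1
          obtain ⟨u, w, hu, hw1, hw2, hw3, rfl⟩ := hned
          have hHtop : ∀ (a b : R3), a.totalDegree ≤ k → b.IsHomogeneous (k+1) →
              homogeneousComponent (k+1) (a + b) = b := by
            intro a b ha hb
            rw [map_add, homogeneousComponent_eq_zero _ a (by omega), H_self hb, zero_add]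
          obtain ⟨hcx1, hcx2, hcx3⟩ := crossX_homog hw1 hw2 hw3
          have e1 : homogeneousComponent (k+1) (u + cross3 xvec w).1 = (cross3 xvec w).1 := by
            rw [Prod.fst_add]; exact hHtop _ _ hu.1 hcx1
          have e2 : homogeneousComponent (k+1) (u + cross3 xvec w).2.1 = (cross3 xvec w).2.1 := by
            rw [Prod.snd_add, Prod.fst_add]; exact hHtop _ _ hu.2.1 hcx2
          have e3 : homogeneousComponent (k+1) (u + cross3 xvec w).2.2 = (cross3 xvec w).2.2 := by
            rw [Prod.snd_add, Prod.snd_add]; exact hHtop _ _ hu.2.2 hcx3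
          rw [e1, e2, e3]
          have hzero : X 0 * (cross3 xvec w).1 + X 1 * (cross3 xvec w).2.1 +
              X 2 * (cross3 xvec w).2.2 = 0 := by
            simp only [cross3, xvec]
            ring
          rw [hzero, mul_zero]
          simp
      · rw [grad3_sum, Finset.sum_congr rfl (fun m _ => hterm m)]
        exact (sumHv (by simpa using hdeg) (by omega)).symm
  -- Part (iii)
  · ext w
    simp only [Set.mem_setOf_eq]
    constructor
    · rintro ⟨v, hv, rfl⟩
      have hdeg : memP3 (k+1) v := memNedE_deg hv
      refine ⟨⟨curl3 v, 0, ?_, isHomogeneous_zero _ _ _, by simp⟩, ?_⟩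
      · exact ⟨(totalDegree_sub _ _).trans (max_le (totalDegree_pderiv_le _ _ hdeg.2.2)
            (totalDegree_pderiv_le _ _ hdeg.2.1)),
          (totalDegree_sub _ _).trans (max_le (totalDegree_pderiv_le _ _ hdeg.1)
            (totalDegree_pderiv_le _ _ hdeg.2.2)),
          (totalDegree_sub _ _).trans (max_le (totalDegree_pderiv_le _ _ hdeg.2.1)
            (totalDegree_pderiv_le _ _ hdeg.1))⟩
      · simp only [div3, curl3, map_sub]
        rw [pderiv_comm3 1 0, pderiv_comm3 2 0, pderiv_comm3 2 1]
        ring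
    · rintro ⟨⟨u, p, hu, hp, rfl⟩, hdiv⟩
      have hXp : ((X 0 * p, X 1 * p, X 2 * p) : Vec3) = xmul p := rfl
      rw [hXp] at hdiv ⊢
      have hdiv' : div3 u + C ((k:ℝ)+3) * p = 0 := by
        rw [← divXmul hp, ← div3_add]; exact hdiv
      have hp0 : p = 0 := by
        have h1 : homogeneousComponent k (div3 u + C ((k:ℝ)+3) * p) = 0 := by
          rw [hdiv', map_zero]
        rw [map_add, homogeneousComponent_C_mul, H_self hp] at h1
        have h2 : homogeneousComponent k (div3 u) = 0 := by
          simp only [div3, map_add, H_pderiv_high hu.1, H_pderiv_high hu.2.1,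
            H_pderiv_high hu.2.2, add_zero, zero_add]
        rw [h2, zero_add] at h1
        have h3 : (C ((k:ℝ)+3) : R3) ≠ 0 := by
          rw [ne_eq, MvPolynomial.C_eq_zero]
          positivity
        exact (mul_eq_zero.mp h1).resolve_left h3
      subst hp0
      rw [xmul_zero, add_zero] at hdiv ⊢
      have hdivH : ∀ m, div3 (Hv m u) = 0 := by
        intro m
        match m with
        | 0 => exact Hv_zero_div u
        | n+1 => rw [div3_Hv_succ, hdiv, map_zero]
      have hterm : ∀ m : ℕ, curl3 (cmul (-(1/((m:ℝ)+2))) (cross3 xvec (Hv m u))) = Hv m u := by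
        intro m
        rw [curl3_cmul, curlCross (homogeneousComponent_isHomogeneous m _)
          (homogeneousComponent_isHomogeneous m _) (homogeneousComponent_isHomogeneous m _),
          hdivH m, xmul_zero, zero_sub, neg_cmul, cmul_cmul,
          show (-(1/((m:ℝ)+2))) * -((m:ℝ)+2) = 1 by
            have : ((m:ℝ)+2) ≠ 0 := by positivity
            field_simp,
          cmul_one]
      refine ⟨∑ m ∈ Finset.range (k+1), cmul (-(1/((m:ℝ)+2))) (cross3 xvec (Hv m u)), ?_, ?_⟩
      · rw [Finset.sum_range_succ, ← cross3_cmul]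
        refine ⟨∑ m ∈ Finset.range k, cmul (-(1/((m:ℝ)+2))) (cross3 xvec (Hv m u)),
          cmul (-(1/((k:ℝ)+2))) (Hv k u), ?_, ?_, ?_, ?_, rfl⟩
        · apply memP3_sum
          intro m hm
          simp only [Finset.mem_range] at hm
          exact memP3_cmul _ (memP3_mono (by omega)
            (memP3_crossX (homogeneousComponent_isHomogeneous m _)
              (homogeneousComponent_isHomogeneous m _)
              (homogeneousComponent_isHomogeneous m _)))
        · exact (homogeneousComponent_isHomogeneous k _).C_mul _
        · exact (homogeneousComponent_isHomogeneous k _).C_mul _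
        · exact (homogeneousComponent_isHomogeneous k _).C_mul _
      · rw [curl3_sum, Finset.sum_congr rfl (fun m _ => hterm m)]
        exact (sumHv (by simpa using hu) (by omega)).symm
  -- Part (iv)
  · intro q hq
    refine ⟨∑ m ∈ Finset.range (k+1), cmul (1/((m:ℝ)+3)) (xmul (homogeneousComponent m q)),
      ?_, ?_⟩
    · rw [Finset.sum_range_succ, cmul_xmul]
      refine ⟨∑ m ∈ Finset.range k, cmul (1/((m:ℝ)+3)) (xmul (homogeneousComponent m q)),
        C (1/((k:ℝ)+3)) * homogeneousComponent k q, ?_,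
        (homogeneousComponent_isHomogeneous k q).C_mul _, rfl⟩
      apply memP3_sum
      intro m hm
      simp only [Finset.mem_range] at hm
      exact memP3_cmul _ (memP3_mono (by omega)
        (memP3_xmul (homogeneousComponent_isHomogeneous m q).totalDegree_le))
    · rw [div3_sum]
      have hterm : ∀ m : ℕ, div3 (cmul (1/((m:ℝ)+3)) (xmul (homogeneousComponent m q))) =
          homogeneousComponent m q := by
        intro m
        rw [div3_cmul, divXmul (homogeneousComponent_isHomogeneous m q), ← mul_assoc, ← map_mul,
          show (1/((m:ℝ)+3)) * ((m:ℝ)+3) = 1 by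
            have : ((m:ℝ)+3) ≠ 0 := by positivity
            field_simp,
          map_one, one_mul]
      rw [Finset.sum_congr rfl (fun m _ => hterm m)]
      exact sumH (by omega)
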